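/- Let q > 0 and let (p_n)_{n ≥ 1} be the q-Mallows process. Then for every n, deterministically (for every realization of the process), the number of inversions satisfies l(p_n) = n(n+1)/2 - Σ_{i=1}^n p_i(i). -/

import Mathlib

open MeasureTheory Filter

/-- Number of inversions of a permutation of `Fin n`. -/
def inversions {n : ℕ} (π : Equiv.Perm (Fin n)) : ℕ :=
  (Finset.univ.filter (fun p : Fin n × Fin n => p.1 < p.2 ∧ π p.2 < π p.1)).card


lemma inversions_eq_sum {n : ℕ} (π : Equiv.Perm (Fin n)) :
    inversions π = ∑ k : Fin n, ∑ i : Fin n, if i < k ∧ π k < π i then 1 else 0 := by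
  rw [inversions, Finset.card_filter, Fintype.sum_prod_type, Finset.sum_comm]

structure QMallowsProcess (Ω : Type*) [MeasurableSpace Ω] (ℙ : Measure Ω) (q : ℝ) where
  /-- the permutation-valued process; `p n` is the permutation of `[n]`. -/
  p : (n : ℕ) → Ω → Equiv.Perm (Fin n)
  meas : ∀ n : ℕ, Measurable fun ω => ((p (n + 1) ω (Fin.last n) : ℕ))
  /-- `P(p_n(n) = j) = (1-q)q^{j-1}/(1-q^n)` (here with `0`-based `j`). -/
  dist : ∀ (n : ℕ) (j : Fin (n + 1)),
    (ℙ {ω | p (n + 1) ω (Fin.last n) = j}).toReal = (1 - q) * q ^ (j : ℕ) / (1 - q ^ (n + 1))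
  /-- the variables `p_n(n)`, `n ≥ 1`, are independent. -/
  indep : ProbabilityTheory.iIndepFun
    (fun (n : ℕ) (ω : Ω) => ((p (n + 1) ω (Fin.last n) : ℕ))) ℙ
  /-- the insertion rule: `p_n(i) = p_{n-1}(i)` if `p_{n-1}(i) < p_n(n)`, and
  `p_n(i) = p_{n-1}(i) + 1` otherwise. -/
  step : ∀ (ω : Ω) (n : ℕ) (i : Fin n),
    ((p (n + 1) ω i.castSucc : ℕ)) =
      if ((p n ω i : ℕ)) < ((p (n + 1) ω (Fin.last n) : ℕ)) then ((p n ω i : ℕ))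
      else ((p n ω i : ℕ)) + 1


lemma inversions_step {Ω : Type*} [MeasurableSpace Ω] {ℙ : Measure Ω} {q : ℝ}
    (P : QMallowsProcess Ω ℙ q) (ω : Ω) (n : ℕ) :
    inversions (P.p (n+1) ω) + ((P.p (n+1) ω (Fin.last n) : ℕ)) =
      inversions (P.p n ω) + n := by
  set σ := P.p (n+1) ω with hσ
  set τ := P.p n ω with hτ
  set j := ((σ (Fin.last n) : ℕ)) with hjdef
  have hstep : ∀ i : Fin n, (σ i.castSucc : ℕ) =
      if (τ i : ℕ) < j then (τ i : ℕ) else (τ i : ℕ) + 1 := P.step ω n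
  rw [inversions_eq_sum, inversions_eq_sum]
  have L1 : ∀ k : Fin (n+1), (∑ i : Fin (n+1), if i < k ∧ σ k < σ i then (1:ℕ) else 0)
      = ∑ i : Fin n, (if i.castSucc < k ∧ σ k < σ i.castSucc then 1 else 0) := by
    intro k
    rw [Fin.sum_univ_castSucc]
    have hk : ¬ (Fin.last n < k) := (Fin.le_last k : k ≤ Fin.last n).not_gt
    simp [hk]
  calc (∑ k : Fin (n+1), ∑ i : Fin (n+1), if i < k ∧ σ k < σ i then (1:ℕ) else 0) + j
      = (∑ k : Fin (n+1), ∑ i : Fin n,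
          if i.castSucc < k ∧ σ k < σ i.castSucc then (1:ℕ) else 0) + j := by
        rw [Finset.sum_congr rfl (fun k _ => L1 k)]
    _ = ((∑ k : Fin n, ∑ i : Fin n,
          if i.castSucc < k.castSucc ∧ σ k.castSucc < σ i.castSucc then (1:ℕ) else 0) +
        ∑ i : Fin n, if i.castSucc < Fin.last n ∧ σ (Fin.last n) < σ i.castSucc then (1:ℕ) else 0)
        + j := by rw [Fin.sum_univ_castSucc]
    _ = ((∑ k : Fin n, ∑ i : Fin n, if i < k ∧ τ k < τ i then (1:ℕ) else 0) +
        ∑ i : Fin n, if j ≤ (τ i : ℕ) then (1:ℕ) else 0) + j := by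
        congr 2
        · refine Finset.sum_congr rfl (fun k _ => Finset.sum_congr rfl (fun i _ => ?_))
          have h1 : (σ k.castSucc < σ i.castSucc) ↔ (τ k < τ i) := by
            rw [Fin.lt_def, Fin.lt_def, hstep i, hstep k]
            split_ifs <;> omega
          simp [Fin.castSucc_lt_castSucc_iff, h1]
        · refine Finset.sum_congr rfl (fun i _ => ?_)
          have h2 : (σ (Fin.last n) < σ i.castSucc) ↔ j ≤ (τ i : ℕ) := by
            rw [Fin.lt_def, hstep i, ← hjdef]
            split_ifs <;> omega
          simp [Fin.castSucc_lt_last, h2]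
    _ = ((∑ k : Fin n, ∑ i : Fin n, if i < k ∧ τ k < τ i then (1:ℕ) else 0) + (n - j)) + j := by
        congr 2
        have e1 : (∑ i : Fin n, if j ≤ (τ i : ℕ) then (1:ℕ) else 0)
            = ∑ x : Fin n, if j ≤ (x : ℕ) then (1:ℕ) else 0 :=
          Equiv.sum_comp τ (fun x : Fin n => if j ≤ (x : ℕ) then (1:ℕ) else 0)
        rw [e1, Fin.sum_univ_eq_sum_range (fun m => if j ≤ m then (1:ℕ) else 0),
          ← Finset.card_filter]
        rw [show (Finset.range n).filter (fun m => j ≤ m) = Finset.Ico j n by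
          ext m; simp [Finset.mem_Ico]; omega]
        exact Nat.card_Ico j n
    _ = (∑ k : Fin n, ∑ i : Fin n, if i < k ∧ τ k < τ i then (1:ℕ) else 0) + n := by
        have : j ≤ n := Fin.is_le _
        omega

/-- **Corollary 2.3.** For the `q`-Mallows process, deterministically,
`l(p_n) = n(n+1)/2 - ∑_{i=1}^n p_i(i)`.  (The summand `p_i(i)`, with the paper's `1`-based
values, is `(P.p (i+1) ω (Fin.last i) : ℕ) + 1` for `i : Fin n`.) -/
theorem qMallowsProcess_inversions
    {Ω : Type*} [MeasurableSpace Ω] (ℙ : Measure Ω) [IsProbabilityMeasure ℙ]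
    (q : ℝ) (hq : 0 < q) (P : QMallowsProcess Ω ℙ q) :
    ∀ (ω : Ω) (n : ℕ),
      inversions (P.p n ω) =
        (n + 1) * n / 2 - ∑ i : Fin n, (((P.p ((i : ℕ) + 1) ω (Fin.last (i : ℕ))) : ℕ) + 1) := by
  intro ω n
  have key : ∀ m : ℕ, inversions (P.p m ω) +
      ∑ i : Fin m, (((P.p ((i : ℕ) + 1) ω (Fin.last (i : ℕ))) : ℕ) + 1) = (m + 1) * m / 2 := by
    intro m
    induction m with
    | zero => simp [inversions]
    | succ m ih =>
      rw [Fin.sum_univ_castSucc]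
      simp only [Fin.coe_castSucc, Fin.val_last]
      have h2 := inversions_step P ω m
      have hle : ((P.p (m+1) ω (Fin.last m) : ℕ)) ≤ m := Fin.is_le _
      have harith : (m + 1 + 1) * (m + 1) = (m + 1) * m + 2 * (m + 1) := by ring
      omega
  have := key n
  omega
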